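/- arXiv:1307.0656 — 10 statements merged into one kernel-verified Lean document; each statement's English description precedes it below -/
import Mathlib

section
/- Let α ≤ 0 and ε ≥ 0, and let f : (0,1) → ℝ satisfy |f(x) + (1-x)^α f(y/(1-x)) - f(y) - (1-y)^α f(x/(1-y))| ≤ ε for all (x,y) with x, y, x+y ∈ (0,1). Define F(u,v) = (u+v)^α f(v/(u+v)) for u, v > 0. Then |F(u+v, w) + F(u,v) - F(u+w, v) - F(u,w)| ≤ ε(u+v+w)^α for all u, v, w > 0. -/
/-!
Put `s = u + v + w`, `x = w / s` and `y = v / s`. Since `F` is homogeneous of degree `α`,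
each of the four terms equals `s ^ α` times its value at the point scaled down by `s`, and there
`F (1 - x) x = f x` and `F (1 - x - y) y = (1 - x) ^ α * f (y / (1 - x))`. So the left-hand side
is `s ^ α` times the expression bounded by `ε` in the hypothesis at `(x, y)`.
-/

section Homogeneous

variable {α : ℝ} {f : ℝ → ℝ} {F : ℝ → ℝ → ℝ}
  (hF : ∀ u v : ℝ, 0 < u → 0 < v → F u v = (u + v) ^ α * f (v / (u + v)))
include hF

theorem homogeneous_of_eq_rpow_mul {t u v : ℝ} (ht : 0 < t) (hu : 0 < u) (hv : 0 < v) :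
    F (t * u) (t * v) = t ^ α * F u v := by
  rw [hF _ _ (mul_pos ht hu) (mul_pos ht hv), hF u v hu hv, ← mul_add,
    Real.mul_rpow ht.le (by positivity), mul_div_mul_left _ _ ht.ne', mul_assoc]

theorem apply_of_add_eq {u v r : ℝ} (hu : 0 < u) (hv : 0 < v) (huv : u + v = r) :
    F u v = r ^ α * f (v / r) := by
  rw [hF u v hu hv, huv]

theorem cocycle_expr_scaled {s x y : ℝ} (hs : 0 < s) (hx : 0 < x) (hy : 0 < y) (hxy : x + y < 1) :
    F (s * (1 - x)) (s * x) + F (s * (1 - x - y)) (s * y)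
        - F (s * (1 - y)) (s * y) - F (s * (1 - x - y)) (s * x) =
      s ^ α * (f x + (1 - x) ^ α * f (y / (1 - x)) - f y - (1 - y) ^ α * f (x / (1 - y))) := by
  have hx1 : 0 < 1 - x := by linarith
  have hy1 : 0 < 1 - y := by linarith
  have hxy1 : 0 < 1 - x - y := by linarith
  rw [homogeneous_of_eq_rpow_mul hF hs hx1 hx, homogeneous_of_eq_rpow_mul hF hs hxy1 hy,
    homogeneous_of_eq_rpow_mul hF hs hy1 hy, homogeneous_of_eq_rpow_mul hF hs hxy1 hx,
    apply_of_add_eq hF hx1 hx (sub_add_cancel 1 x), apply_of_add_eq hF hy1 hy (sub_add_cancel 1 y),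
    apply_of_add_eq hF hxy1 hy (sub_add_cancel (1 - x) y),
    apply_of_add_eq hF hxy1 hx (by ring : 1 - x - y + x = 1 - y)]
  simp only [Real.one_rpow, div_one]
  ring

end Homogeneous

theorem stmt2_general (α ε : ℝ) (f : ℝ → ℝ)
    (h : ∀ x y : ℝ, 0 < x → 0 < y → x + y < 1 →
      |f x + (1 - x) ^ α * f (y / (1 - x)) - f y - (1 - y) ^ α * f (x / (1 - y))| ≤ ε)
    (F : ℝ → ℝ → ℝ)
    (hF : ∀ u v : ℝ, 0 < u → 0 < v → F u v = (u + v) ^ α * f (v / (u + v))) :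
    ∀ u v w : ℝ, 0 < u → 0 < v → 0 < w →
      |F (u + v) w + F u v - F (u + w) v - F u w| ≤ ε * (u + v + w) ^ α := by
  intro u v w hu hv hw
  set s := u + v + w
  have hs : 0 < s := by positivity
  have hxy : w / s + v / s < 1 := by
    rw [← add_div, div_lt_one hs]
    linarith
  have key := cocycle_expr_scaled hF hs (div_pos hw hs) (div_pos hv hs) hxy
  have e_u : s * (1 - w / s - v / s) = u := by field_simp; ring
  have e_uv : s * (1 - w / s) = u + v := by field_simp; ring
  have e_uw : s * (1 - v / s) = u + w := by field_simp; ring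
  rw [e_u, e_uv, e_uw, mul_div_cancel₀ _ hs.ne', mul_div_cancel₀ _ hs.ne'] at key
  rw [key, abs_mul, abs_of_nonneg (Real.rpow_nonneg hs.le α), mul_comm ε]
  exact mul_le_mul_of_nonneg_left (h _ _ (div_pos hw hs) (div_pos hv hs) hxy)
    (Real.rpow_nonneg hs.le α)

theorem stmt2 (α ε : ℝ) (hα : α ≤ 0) (hε : 0 ≤ ε) (f : ℝ → ℝ)
    (h : ∀ x y : ℝ, 0 < x → 0 < y → x + y < 1 →
      |f x + (1 - x) ^ α * f (y / (1 - x)) - f y - (1 - y) ^ α * f (x / (1 - y))| ≤ ε)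
    (F : ℝ → ℝ → ℝ)
    (hF : ∀ u v : ℝ, 0 < u → 0 < v → F u v = (u + v) ^ α * f (v / (u + v))) :
    ∀ u v w : ℝ, 0 < u → 0 < v → 0 < w →
      |F (u + v) w + F u v - F (u + w) v - F u w| ≤ ε * (u + v + w) ^ α :=
  stmt2_general α ε f h F hF
end

section
/- Let α ≤ 0, ε ≥ 0, and let F : (0,∞)² → ℝ satisfy F(tu,tv) = t^α F(u,v) for all t,u,v > 0 and |F(u+v,w) + F(u,v) - F(u+w,v) - F(u,w)| ≤ ε(u+v+w)^α for all u,v,w > 0. Define g(u) = F(u,1) - F(1,u) and G(u,v) = F(u,v) + g(v). Then |G(u,v) - G(v,u)| ≤ 3ε(u+v+1)^α for all u, v > 0. -/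
/-- Defect of the fundamental equation of information (FEI). -/
def feiDefect (F : ℝ → ℝ → ℝ) (u v w : ℝ) : ℝ :=
  F (u + v) w + F u v - F (u + w) v - F u w

lemma feiDefect_sub_sub_add (F : ℝ → ℝ → ℝ) (u v : ℝ) :
    feiDefect F 1 u v - feiDefect F u 1 v + feiDefect F v 1 u =
      (F u v + (F v 1 - F 1 v)) - (F v u + (F u 1 - F 1 u)) := by
  simp only [feiDefect, add_comm 1 u, add_comm 1 v, add_comm v u]
  ring

lemma abs_sub_add_le_three_mul {a b c M : ℝ} (ha : |a| ≤ M) (hb : |b| ≤ M) (hc : |c| ≤ M) :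
    |a - b + c| ≤ 3 * M :=
  calc |a - b + c| ≤ |a - b| + |c| := abs_add_le _ _
    _ ≤ |a| + |b| + |c| := by gcongr; exact abs_sub _ _
    _ ≤ 3 * M := by linarith

theorem stmt3_general (α ε : ℝ) (F : ℝ → ℝ → ℝ)
    (hineq : ∀ u v w : ℝ, 0 < u → 0 < v → 0 < w →
      |F (u + v) w + F u v - F (u + w) v - F u w| ≤ ε * (u + v + w) ^ α)
    (g : ℝ → ℝ) (hg : ∀ u : ℝ, 0 < u → g u = F u 1 - F 1 u)
    (G : ℝ → ℝ → ℝ) (hG : ∀ u v : ℝ, 0 < u → 0 < v → G u v = F u v + g v) :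
    ∀ u v : ℝ, 0 < u → 0 < v → |G u v - G v u| ≤ 3 * ε * (u + v + 1) ^ α := by
  intro u v hu hv
  have hD : ∀ x y z : ℝ, 0 < x → 0 < y → 0 < z →
      |feiDefect F x y z| ≤ ε * (x + y + z) ^ α := hineq
  rw [hG u v hu hv, hG v u hv hu, hg u hu, hg v hv, ← feiDefect_sub_sub_add, mul_assoc]
  refine abs_sub_add_le_three_mul ?_ ?_ ?_
  · exact (hD 1 u v one_pos hu hv).trans_eq (by ring_nf)
  · exact (hD u 1 v hu one_pos hv).trans_eq (by ring_nf)
  · exact (hD v 1 u hv one_pos hu).trans_eq (by ring_nf)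

theorem stmt3 (α ε : ℝ) (hα : α ≤ 0) (hε : 0 ≤ ε) (F : ℝ → ℝ → ℝ)
    (hhom : ∀ t u v : ℝ, 0 < t → 0 < u → 0 < v → F (t * u) (t * v) = t ^ α * F u v)
    (hineq : ∀ u v w : ℝ, 0 < u → 0 < v → 0 < w →
      |F (u + v) w + F u v - F (u + w) v - F u w| ≤ ε * (u + v + w) ^ α)
    (g : ℝ → ℝ) (hg : ∀ u : ℝ, 0 < u → g u = F u 1 - F 1 u)
    (G : ℝ → ℝ → ℝ) (hG : ∀ u v : ℝ, 0 < u → 0 < v → G u v = F u v + g v) :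
    ∀ u v : ℝ, 0 < u → 0 < v → |G u v - G v u| ≤ 3 * ε * (u + v + 1) ^ α :=
  stmt3_general α ε F hineq g hg G hG
end

section
/- Let α < 0 and let g : (0,∞) → ℝ satisfy g(uv) = g(u) v^α + g(v) for all u, v > 0. Then there exists c ∈ ℝ such that g(u) = c(u^α - 1) for all u > 0; in fact c = g(2)/(2^α - 1). -/
/-! Expanding `g (u * v)` and `g (v * u)` with the cocycle identity and comparing gives
`g u * (v ^ α - 1) = g v * (u ^ α - 1)`; taking `v = 2`, where `2 ^ α ≠ 1` because `α < 0`,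
solves for `g u`. -/

theorem cocycle_mul_sub_one_eq {α : ℝ} {g : ℝ → ℝ}
    (hg : ∀ u v : ℝ, 0 < u → 0 < v → g (u * v) = g u * v ^ α + g v)
    {u v : ℝ} (hu : 0 < u) (hv : 0 < v) :
    g u * (v ^ α - 1) = g v * (u ^ α - 1) := by
  have h := hg u v hu hv
  rw [mul_comm, hg v u hv hu] at h
  linarith

theorem stmt4 (α : ℝ) (hα : α < 0) (g : ℝ → ℝ)
    (hg : ∀ u v : ℝ, 0 < u → 0 < v → g (u * v) = g u * v ^ α + g v) :
    ∃ c : ℝ, c = g 2 / ((2 : ℝ) ^ α - 1) ∧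
      ∀ u : ℝ, 0 < u → g u = c * (u ^ α - 1) := by
  have h2 : (2 : ℝ) ^ α - 1 ≠ 0 :=
    (sub_neg.2 (Real.rpow_lt_one_of_one_lt_of_neg one_lt_two hα)).ne
  refine ⟨_, rfl, fun u hu => ?_⟩
  rw [div_mul_eq_mul_div, ← cocycle_mul_sub_one_eq hg hu two_pos, mul_div_cancel_right₀ _ h2]
end

section
/- Let α < 0, ε ≥ 0, and suppose F : (0,∞)² → ℝ satisfies F(tu,tv) = t^α F(u,v) for all t,u,v > 0, and g(u) := F(u,1) - F(1,u) satisfies |F(u,v) + g(v) - F(v,u) - g(u)| ≤ 3ε(u+v+1)^α for all u,v > 0. Then g(uv) = g(u)v^α + g(v) for all u, v > 0, and consequently g(u) = c(u^α - 1) with c = g(2)(2^α - 1)^{-1}. -/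
/-!
Put `G u v := F u v - F v u`, so that `g u = G u 1` and the hypothesis says that the
`α`-homogeneous function `G` stays within `3ε` of the coboundary `g u - g v`. Rescaling a
triple `(a, b, c)` by `t` multiplies the cocycle defect `G a b + G b c - G a c` by `t ^ α`,
while the coboundary parts telescope away; since `t ^ α → ∞` as `t → 0⁺`, the defect vanishes.
The cocycle identity `G (u v) 1 = G (u v) v + G v 1` together with homogeneity is the functional
equation for `g`, and comparing it with its instance for `v u` gives the closed form.
-/

open Filter Topology Real

theorem eq_zero_of_forall_rpow_mul_abs_le {α x C : ℝ} (hα : α < 0)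
    (h : ∀ t : ℝ, 0 < t → t ^ α * |x| ≤ C) : x = 0 := by
  by_contra hx
  have hlim : Tendsto (fun t : ℝ => t ^ α * |x|) (𝓝[>] 0) atTop :=
    (tendsto_rpow_neg_nhdsGT_zero hα).atTop_mul_const (abs_pos.mpr hx)
  obtain ⟨t, hCt, ht⟩ := ((hlim.eventually_gt_atTop C).and self_mem_nhdsWithin).exists
  exact (h t ht).not_gt hCt

theorem add_eq_of_homogeneous_of_abs_sub_coboundary_le {α C : ℝ} (hα : α < 0)
    {G : ℝ → ℝ → ℝ} {h : ℝ → ℝ}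
    (hhom : ∀ t u v : ℝ, 0 < t → 0 < u → 0 < v → G (t * u) (t * v) = t ^ α * G u v)
    (hclose : ∀ u v : ℝ, 0 < u → 0 < v → |G u v - (h u - h v)| ≤ C)
    {a b c : ℝ} (ha : 0 < a) (hb : 0 < b) (hc : 0 < c) : G a b + G b c = G a c := by
  suffices G a b + G b c - G a c = 0 by linarith
  refine eq_zero_of_forall_rpow_mul_abs_le hα (C := 3 * C) fun t ht => ?_
  have hab := abs_le.mp (hclose (t * a) (t * b) (mul_pos ht ha) (mul_pos ht hb))
  have hbc := abs_le.mp (hclose (t * b) (t * c) (mul_pos ht hb) (mul_pos ht hc))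
  have hac := abs_le.mp (hclose (t * a) (t * c) (mul_pos ht ha) (mul_pos ht hc))
  rw [hhom t a b ht ha hb] at hab
  rw [hhom t b c ht hb hc] at hbc
  rw [hhom t a c ht ha hc] at hac
  rw [← abs_of_pos (rpow_pos_of_pos ht α), ← abs_mul, abs_le, mul_sub, mul_add]
  constructor <;> linarith [hab.1, hab.2, hbc.1, hbc.2, hac.1, hac.2]

theorem eq_mul_rpow_sub_one_of_map_mul {α b : ℝ} {g : ℝ → ℝ}
    (hg : ∀ u v : ℝ, 0 < u → 0 < v → g (u * v) = g u * v ^ α + g v)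
    (hb : 0 < b) (hbα : b ^ α ≠ 1) {u : ℝ} (hu : 0 < u) :
    g u = g b * (b ^ α - 1)⁻¹ * (u ^ α - 1) := by
  have hub := hg u b hu hb
  have hbu := hg b u hb hu
  rw [mul_comm b u] at hbu
  have hbα' : b ^ α - 1 ≠ 0 := sub_ne_zero.mpr hbα
  field_simp
  linear_combination hbu - hub

theorem stmt5 (α ε : ℝ) (hα : α < 0) (hε : 0 ≤ ε) (F : ℝ → ℝ → ℝ)
    (hhom : ∀ t u v : ℝ, 0 < t → 0 < u → 0 < v → F (t * u) (t * v) = t ^ α * F u v)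
    (g : ℝ → ℝ) (hg : ∀ u : ℝ, 0 < u → g u = F u 1 - F 1 u)
    (hineq : ∀ u v : ℝ, 0 < u → 0 < v →
      |F u v + g v - F v u - g u| ≤ 3 * ε * (u + v + 1) ^ α) :
    (∀ u v : ℝ, 0 < u → 0 < v → g (u * v) = g u * v ^ α + g v) ∧
      ∀ u : ℝ, 0 < u → g u = g 2 * ((2 : ℝ) ^ α - 1)⁻¹ * (u ^ α - 1) := by
  set G : ℝ → ℝ → ℝ := fun u v => F u v - F v u with hG
  have hGhom : ∀ t u v : ℝ, 0 < t → 0 < u → 0 < v → G (t * u) (t * v) = t ^ α * G u v := by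
    intro t u v ht hu hv
    simp only [hG, hhom t u v ht hu hv, hhom t v u ht hv hu, mul_sub]
  have hGclose : ∀ u v : ℝ, 0 < u → 0 < v → |G u v - (g u - g v)| ≤ 3 * ε := by
    intro u v hu hv
    have hpow : (u + v + 1) ^ α ≤ 1 := rpow_le_one_of_one_le_of_nonpos (by linarith) hα.le
    calc |G u v - (g u - g v)| = |F u v + g v - F v u - g u| := by rw [hG]; ring_nf
      _ ≤ 3 * ε * (u + v + 1) ^ α := hineq u v hu hv
      _ ≤ 3 * ε := mul_le_of_le_one_right (by positivity) hpow
  have hmul : ∀ u v : ℝ, 0 < u → 0 < v → g (u * v) = g u * v ^ α + g v := by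
    intro u v hu hv
    have hcocycle := add_eq_of_homogeneous_of_abs_sub_coboundary_le hα hGhom hGclose
      (mul_pos hu hv) hv one_pos
    have hscale := hGhom v u 1 hv hu one_pos
    rw [mul_one, mul_comm v u] at hscale
    rw [hg _ (mul_pos hu hv), hg u hu, hg v hv]
    simp only [hG] at hcocycle hscale
    linarith
  have h2α : (2 : ℝ) ^ α ≠ 1 := (rpow_lt_one_of_one_lt_of_neg one_lt_two hα).ne
  exact ⟨hmul, fun u hu => eq_mul_rpow_sub_one_of_map_mul hmul two_pos h2α hu⟩
end

section
/- Let ε ≥ 0 and let g : (0,∞) → ℝ satisfy |g(tv) - g(v) - g(t)| ≤ 6ε for all t, v > 0. Then there exists a logarithmic function l : (0,∞) → ℝ (l(uv) = l(u) + l(v)) such that |g(u) - l(u)| ≤ 6ε for all u > 0. -/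
/-! Hyers' direct method. Writing `f = g ∘ exp`, the function `f` is additive up to `C = 6ε`.
The sequence `2⁻ⁿ f (2ⁿ x)` moves by at most `C / 2ⁿ⁺¹` at step `n`, so it converges to some
`A x` with `‖f x - A x‖ ≤ C`, and the additivity defect of `A` at `(x, y)` is the limit of
defects `2⁻ⁿ (f (2ⁿ x + 2ⁿ y) - f (2ⁿ x) - f (2ⁿ y))`, which vanish. Then `l = A ∘ log`. -/

open Filter Topology

namespace HyersUlam

variable {G E : Type*} [AddCommMonoid G] [NormedAddCommGroup E] [NormedSpace ℝ E]

noncomputable def approxSeq (f : G → E) (x : G) (n : ℕ) : E := ((2 : ℝ) ^ n)⁻¹ • f (2 ^ n • x)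

variable {f : G → E} {C : ℝ}

lemma dist_approxSeq_succ_le (hf : ∀ x y, ‖f (x + y) - f x - f y‖ ≤ C) (x : G) (n : ℕ) :
    dist (approxSeq f x n) (approxSeq f x (n + 1)) ≤ C / 2 * (1 / 2) ^ n := by
  have hdouble : (2 : ℕ) ^ (n + 1) • x = 2 ^ n • x + 2 ^ n • x := by
    rw [pow_succ, mul_nsmul, two_nsmul]
  have hdiff : approxSeq f x n - approxSeq f x (n + 1)
      = -((2 : ℝ) ^ (n + 1))⁻¹ • (f (2 ^ n • x + 2 ^ n • x) - f (2 ^ n • x) - f (2 ^ n • x)) := by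
    rw [approxSeq, approxSeq, hdouble, pow_succ, mul_inv, ← smul_smul]
    module
  rw [dist_eq_norm, hdiff, norm_smul, norm_neg, norm_inv, norm_pow, Real.norm_two]
  calc ((2 : ℝ) ^ (n + 1))⁻¹ * ‖f (2 ^ n • x + 2 ^ n • x) - f (2 ^ n • x) - f (2 ^ n • x)‖
      ≤ ((2 : ℝ) ^ (n + 1))⁻¹ * C := by gcongr; exact hf _ _
    _ = C / 2 * (1 / 2) ^ n := by rw [pow_succ, one_div, inv_pow]; ring

lemma cauchySeq_approxSeq (hf : ∀ x y, ‖f (x + y) - f x - f y‖ ≤ C) (x : G) :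
    CauchySeq (approxSeq f x) :=
  cauchySeq_of_le_geometric _ _ (by norm_num) (dist_approxSeq_succ_le hf x)

lemma norm_approxSeq_add_sub_le (hf : ∀ x y, ‖f (x + y) - f x - f y‖ ≤ C) (x y : G) (n : ℕ) :
    ‖approxSeq f (x + y) n - approxSeq f x n - approxSeq f y n‖ ≤ C * (1 / 2) ^ n := by
  have hdiff : approxSeq f (x + y) n - approxSeq f x n - approxSeq f y n
      = ((2 : ℝ) ^ n)⁻¹ • (f (2 ^ n • x + 2 ^ n • y) - f (2 ^ n • x) - f (2 ^ n • y)) := by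
    rw [approxSeq, approxSeq, approxSeq, nsmul_add, smul_sub, smul_sub]
  rw [hdiff, norm_smul, norm_inv, norm_pow, Real.norm_two, one_div, inv_pow, mul_comm C]
  gcongr
  exact hf _ _

variable [CompleteSpace E]

theorem exists_addMonoidHom_norm_sub_le (hf : ∀ x y, ‖f (x + y) - f x - f y‖ ≤ C) :
    ∃ A : G →+ E, ∀ x, ‖f x - A x‖ ≤ C := by
  choose A hA using fun x ↦ cauchySeq_tendsto_of_complete (cauchySeq_approxSeq hf x)
  have hadd (x y : G) : A (x + y) = A x + A y := by
    have hdefect : Tendsto (fun n ↦ approxSeq f (x + y) n - approxSeq f x n - approxSeq f y n)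
        atTop (𝓝 0) :=
      squeeze_zero_norm (norm_approxSeq_add_sub_le hf x y) <| by
        simpa using (tendsto_pow_atTop_nhds_zero_of_lt_one (r := (1 / 2 : ℝ))
          (by norm_num) (by norm_num)).const_mul C
    have := tendsto_nhds_unique (((hA (x + y)).sub (hA x)).sub (hA y)) hdefect
    rwa [sub_sub, sub_eq_zero] at this
  refine ⟨AddMonoidHom.mk' A hadd, fun x ↦ ?_⟩
  calc ‖f x - A x‖ = dist (approxSeq f x 0) (A x) := by simp [approxSeq, dist_eq_norm]
    _ ≤ C / 2 / (1 - 1 / 2) :=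
      dist_le_of_le_geometric_of_tendsto₀ _ _ (by norm_num) (dist_approxSeq_succ_le hf x) (hA x)
    _ = C := by ring

end HyersUlam

theorem stmt6_general (ε : ℝ) (g : ℝ → ℝ)
    (h : ∀ t v : ℝ, 0 < t → 0 < v → |g (t * v) - g v - g t| ≤ 6 * ε) :
    ∃ l : ℝ → ℝ, (∀ u v : ℝ, 0 < u → 0 < v → l (u * v) = l u + l v) ∧
      ∀ u : ℝ, 0 < u → |g u - l u| ≤ 6 * ε := by
  have hexp (x y : ℝ) : ‖g (Real.exp (x + y)) - g (Real.exp x) - g (Real.exp y)‖ ≤ 6 * ε := by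
    simpa [Real.exp_add, sub_right_comm _ (g (Real.exp y))] using
      h _ _ (Real.exp_pos x) (Real.exp_pos y)
  obtain ⟨A, hA⟩ := HyersUlam.exists_addMonoidHom_norm_sub_le (f := g ∘ Real.exp) hexp
  refine ⟨A ∘ Real.log, fun u v hu hv ↦ ?_, fun u hu ↦ ?_⟩
  · simp [Real.log_mul hu.ne' hv.ne']
  · simpa [Real.exp_log hu] using hA (Real.log u)

theorem stmt6 (ε : ℝ) (hε : 0 ≤ ε) (g : ℝ → ℝ)
    (h : ∀ t v : ℝ, 0 < t → 0 < v → |g (t * v) - g v - g t| ≤ 6 * ε) :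
    ∃ l : ℝ → ℝ, (∀ u v : ℝ, 0 < u → 0 < v → l (u * v) = l u + l v) ∧
      ∀ u : ℝ, 0 < u → |g u - l u| ≤ 6 * ε :=
  stmt6_general ε g h
end

section
/- Let α < 0 and f₀ : (0,1) → ℝ. Define F₀(p,q) = f₀(p) + p^α f₀(q) - f₀(pq) - (1-pq)^α f₀((1-p)/(1-pq)) for p, q ∈ (0,1). Then the identity f₀(p)(q^α + (1-q)^α - 1) - f₀(q)(p^α + (1-p)^α - 1) = F₀(q,p) - F₀(p,q) + (1-pq)^α [F₀((1-q)/(1-pq), p) + f₀(1 - (1-p)/(1-pq)) - f₀((1-p)/(1-pq))] holds for all p, q ∈ (0,1). -/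
/-!
With `r = (1 - q) / (1 - p q)` one has `1 - r p = (1 - p) / (1 - p q)` and
`(1 - r) / (1 - r p) = q`, so after expanding `F₀ p q`, `F₀ q p` and `F₀ r p` every value of `f₀`
appears at a point of the claimed identity, and the weights `(1 - p q)^α r^α` and
`(1 - p q)^α (1 - r p)^α` collapse to `(1 - q)^α` and `(1 - p)^α`.
-/

section Substitution

variable {K : Type*} [Field K] {p q : K}

theorem one_sub_div_one_sub_mul_mul (hpq : 1 - p * q ≠ 0) :
    1 - (1 - q) / (1 - p * q) * p = (1 - p) / (1 - p * q) := by
  rw [div_mul_eq_mul_div, one_sub_div hpq]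
  ring

theorem div_one_sub_mul_mul (hpq : 1 - p * q ≠ 0) :
    (1 - q) / (1 - p * q) * p = 1 - (1 - p) / (1 - p * q) := by
  rw [← one_sub_div_one_sub_mul_mul hpq, sub_sub_cancel]

theorem one_sub_div_one_sub_mul_div (hpq : 1 - p * q ≠ 0) (hp : 1 - p ≠ 0) :
    (1 - (1 - q) / (1 - p * q)) / ((1 - p) / (1 - p * q)) = q := by
  rw [one_sub_div hpq, div_div_div_cancel_right₀ hpq, div_eq_iff hp]
  ring

end Substitution

theorem Real.rpow_mul_div_rpow_cancel {c x : ℝ} (hc : 0 < c) (hx : 0 ≤ x) (α : ℝ) :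
    c ^ α * (x / c) ^ α = x ^ α := by
  rw [← Real.mul_rpow hc.le (div_nonneg hx hc.le), mul_div_cancel₀ x hc.ne']

theorem div_one_sub_mul_mem_Ioo {p q : ℝ} (hp : p ∈ Set.Ioo (0 : ℝ) 1)
    (hq : q ∈ Set.Ioo (0 : ℝ) 1) : (1 - q) / (1 - p * q) ∈ Set.Ioo (0 : ℝ) 1 := by
  obtain ⟨hp0, hp1⟩ := hp
  obtain ⟨hq0, hq1⟩ := hq
  have hd : 0 < 1 - p * q := by nlinarith
  exact ⟨div_pos (by linarith) hd, (div_lt_one hd).2 (by nlinarith)⟩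

theorem stmt8_general (α : ℝ) (f₀ : ℝ → ℝ)
    (F₀ : ℝ → ℝ → ℝ)
    (hF₀ : ∀ p q : ℝ, 0 < p → p < 1 → 0 < q → q < 1 →
      F₀ p q = f₀ p + p ^ α * f₀ q - f₀ (p * q) -
        (1 - p * q) ^ α * f₀ ((1 - p) / (1 - p * q))) :
    ∀ p q : ℝ, 0 < p → p < 1 → 0 < q → q < 1 →
      f₀ p * (q ^ α + (1 - q) ^ α - 1) - f₀ q * (p ^ α + (1 - p) ^ α - 1) =
        F₀ q p - F₀ p q + (1 - p * q) ^ α *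
          (F₀ ((1 - q) / (1 - p * q)) p +
            f₀ (1 - (1 - p) / (1 - p * q)) - f₀ ((1 - p) / (1 - p * q))) := by
  intro p q hp hp1 hq hq1
  have hd : 0 < 1 - p * q := by nlinarith
  obtain ⟨hr0, hr1⟩ := div_one_sub_mul_mem_Ioo ⟨hp, hp1⟩ ⟨hq, hq1⟩
  rw [hF₀ p q hp hp1 hq hq1, hF₀ q p hq hq1 hp hp1, hF₀ _ p hr0 hr1 hp hp1,
    one_sub_div_one_sub_mul_mul hd.ne', one_sub_div_one_sub_mul_div hd.ne' (by linarith),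
    div_one_sub_mul_mul hd.ne', mul_comm q p]
  have hrq := Real.rpow_mul_div_rpow_cancel hd (x := 1 - q) (by linarith) α
  have hrp := Real.rpow_mul_div_rpow_cancel hd (x := 1 - p) (by linarith) α
  linear_combination f₀ q * hrp - f₀ p * hrq

theorem stmt8 (α : ℝ) (hα : α < 0) (f₀ : ℝ → ℝ)
    (F₀ : ℝ → ℝ → ℝ)
    (hF₀ : ∀ p q : ℝ, 0 < p → p < 1 → 0 < q → q < 1 →
      F₀ p q = f₀ p + p ^ α * f₀ q - f₀ (p * q) -
        (1 - p * q) ^ α * f₀ ((1 - p) / (1 - p * q))) :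
    ∀ p q : ℝ, 0 < p → p < 1 → 0 < q → q < 1 →
      f₀ p * (q ^ α + (1 - q) ^ α - 1) - f₀ q * (p ^ α + (1 - p) ^ α - 1) =
        F₀ q p - F₀ p q + (1 - p * q) ^ α *
          (F₀ ((1 - q) / (1 - p * q)) p +
            f₀ (1 - (1 - p) / (1 - p * q)) - f₀ ((1 - p) / (1 - p * q))) :=
  stmt8_general α f₀ F₀ hF₀
end

section
/- Let α < 0 and let f : (0,1) → ℝ satisfy f(x) + (1-x)^α f(y/(1-x)) = f(y) + (1-y)^α f(x/(1-y)) for all x, y ∈ (0,1) with x + y < 1. Then there exist a, b ∈ ℝ such that f(x) = a x^α + b(1-x)^α - b for all x ∈ (0,1). -/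
/-!
Extend `f` to the positive quadrant by `g p q = (p + q)^α f (p / (p + q))`. The equation becomes
`g p (q + r) + g q r = g q (p + r) + g p r`, and `g` is homogeneous of degree `α`. The skew part
`g p q - g q p` is then a coboundary `γ p - γ q` with `γ (l p) = γ l + l^α γ p`, which forces
`γ p = c (1 - p^α)` as soon as `α ≠ 0`. Subtracting `c (q^α - (p + q)^α)` makes `g` symmetric,
and a symmetric solution is an additive 2-cocycle `G`. For such a cocycle,
`2 G(u, v) = G(2u, 2v) + G(u, u) + G(v, v) - G(u + v, u + v)`; taking `u + v = 1/2` and using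
homogeneity expresses `(2^(1-α) - 1) G(x, 1 - x)` through `G(1/2, 1/2)` and `x^α + (1 - x)^α - 1`.
-/

open Real

noncomputable def homogenize (α : ℝ) (f : ℝ → ℝ) (p q : ℝ) : ℝ := (p + q) ^ α * f (p / (p + q))

def IsPosHomogeneous (α : ℝ) (g : ℝ → ℝ → ℝ) : Prop :=
  ∀ l p q : ℝ, 0 < l → 0 < p → 0 < q → g (l * p) (l * q) = l ^ α * g p q

def HomogeneousFEI (g : ℝ → ℝ → ℝ) : Prop :=
  ∀ p q r : ℝ, 0 < p → 0 < q → 0 < r → g p (q + r) + g q r = g q (p + r) + g p r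

def IsPosCocycle (G : ℝ → ℝ → ℝ) : Prop :=
  ∀ x y z : ℝ, 0 < x → 0 < y → 0 < z → G x (y + z) + G y z = G (x + y) z + G x y

theorem homogenize_self_one_sub (α : ℝ) (f : ℝ → ℝ) (x : ℝ) : homogenize α f x (1 - x) = f x := by
  simp [homogenize]

theorem isPosHomogeneous_homogenize (α : ℝ) (f : ℝ → ℝ) : IsPosHomogeneous α (homogenize α f) := by
  intro l p q hl hp hq
  rw [homogenize, homogenize, ← mul_add, mul_rpow hl.le (by positivity),
    mul_div_mul_left _ _ hl.ne', mul_assoc]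

theorem homogeneousFEI_homogenize {α : ℝ} {f : ℝ → ℝ}
    (h : ∀ x y : ℝ, 0 < x → 0 < y → x + y < 1 →
      f x + (1 - x) ^ α * f (y / (1 - x)) = f y + (1 - y) ^ α * f (x / (1 - y))) :
    HomogeneousFEI (homogenize α f) := by
  intro p q r hp hq hr
  set s := p + q + r
  have hs : 0 < s := by positivity
  have hxy := h (p / s) (q / s) (by positivity) (by positivity)
    (by rw [← add_div, div_lt_one hs]; linarith)
  have hqr : 1 - p / s = (q + r) / s := by field_simp; ring
  have hpr : 1 - q / s = (p + r) / s := by field_simp; ring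
  rw [hqr, hpr, div_div_div_cancel_right₀ hs.ne', div_div_div_cancel_right₀ hs.ne',
    div_rpow (by positivity) hs.le, div_rpow (by positivity) hs.le] at hxy
  simp only [homogenize, show p + (q + r) = s by ring, show q + (p + r) = s by ring]
  field_simp at hxy
  linear_combination hxy

theorem exists_eq_mul_one_sub_rpow {α : ℝ} (hα : α ≠ 0) {γ : ℝ → ℝ}
    (hγ : ∀ l p : ℝ, 0 < l → 0 < p → γ (l * p) = γ l + l ^ α * γ p) :
    ∃ c : ℝ, ∀ p : ℝ, 0 < p → γ p = c * (1 - p ^ α) := by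
  have h2 : (1 : ℝ) - 2 ^ α ≠ 0 := by
    rw [sub_ne_zero, ne_comm, ← rpow_zero 2, Ne, rpow_right_inj two_pos (by norm_num)]
    exact hα
  refine ⟨γ 2 / (1 - 2 ^ α), fun p hp => ?_⟩
  have := hγ p 2 hp two_pos
  rw [mul_comm, hγ 2 p two_pos hp] at this
  field_simp
  linear_combination -this

namespace HomogeneousFEI

variable {α : ℝ} {g : ℝ → ℝ → ℝ}

theorem sub_swap (hE : HomogeneousFEI g) {p q : ℝ} (hp : 0 < p) (hq : 0 < q) :
    g p q - g q p = (g p 1 - g 1 p) - (g q 1 - g 1 q) := by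
  have h₁ := hE 1 p q one_pos hp hq
  have h₂ := hE 1 q p one_pos hq hp
  have h₃ := hE p q 1 hp hq one_pos
  rw [add_comm q p] at h₂
  rw [add_comm q 1, add_comm p 1] at h₃
  linarith

theorem skew_mul (hE : HomogeneousFEI g) (hH : IsPosHomogeneous α g) {l p : ℝ}
    (hl : 0 < l) (hp : 0 < p) :
    g (l * p) 1 - g 1 (l * p) = (g l 1 - g 1 l) + l ^ α * (g p 1 - g 1 p) := by
  have h₁ := hH l p 1 hl hp one_pos
  have h₂ := hH l 1 p hl one_pos hp
  have h₃ := hE.sub_swap (p := l * p) (q := l * 1) (by positivity) (by positivity)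
  rw [mul_one] at h₁ h₂ h₃
  linear_combination h₁ - h₂ - h₃

theorem exists_symm (hE : HomogeneousFEI g) (hH : IsPosHomogeneous α g) (hα : α ≠ 0) :
    ∃ c : ℝ, ∀ p q : ℝ, 0 < p → 0 < q →
      g p q - c * (q ^ α - (p + q) ^ α) = g q p - c * (p ^ α - (q + p) ^ α) := by
  obtain ⟨c, hc⟩ := exists_eq_mul_one_sub_rpow hα (γ := fun p => g p 1 - g 1 p) fun l p hl hp => hE.skew_mul hH hl hp
  refine ⟨c, fun p q hp hq => ?_⟩
  rw [add_comm q p]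
  linear_combination hE.sub_swap hp hq + hc p hp - hc q hq

theorem sub_rpow (hE : HomogeneousFEI g) (c : ℝ) :
    HomogeneousFEI fun p q => g p q - c * (q ^ α - (p + q) ^ α) := by
  intro p q r hp hq hr
  simp only [show p + (q + r) = q + (p + r) by ring]
  linear_combination hE p q r hp hq hr

theorem isPosCocycle (hE : HomogeneousFEI g)
    (hsymm : ∀ p q : ℝ, 0 < p → 0 < q → g p q = g q p) : IsPosCocycle g := by
  intro x y z hx hy hz
  have := hE x z y hx hz hy
  rwa [add_comm z y, hsymm z y hz hy, hsymm z (x + y) hz (by positivity)] at this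

end HomogeneousFEI

theorem IsPosHomogeneous.sub_rpow {α : ℝ} {g : ℝ → ℝ → ℝ} (hH : IsPosHomogeneous α g) (c : ℝ) :
    IsPosHomogeneous α fun p q => g p q - c * (q ^ α - (p + q) ^ α) := by
  intro l p q hl hp hq
  simp only [← mul_add, mul_rpow hl.le hq.le, mul_rpow hl.le (by positivity : 0 ≤ p + q),
    hH l p q hl hp hq]
  ring

namespace IsPosCocycle

variable {G : ℝ → ℝ → ℝ}

theorem two_mul_apply (hG : IsPosCocycle G)
    (hsymm : ∀ p q : ℝ, 0 < p → 0 < q → G p q = G q p) {u v : ℝ} (hu : 0 < u) (hv : 0 < v) :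
    2 * G u v = G (u + u) (v + v) + G u u + G v v - G (u + v) (u + v) := by
  have h₁ := hG u v v hu hv hv
  have h₂ := hG v u v hv hu hv
  have h₃ := hG u u (v + v) hu hu (by positivity)
  have h₄ := hG u v (u + v) hu hv (by positivity)
  rw [add_comm v u, hsymm v u hv hu] at h₂
  rw [show u + (v + v) = v + (u + v) by ring] at h₃
  linarith

theorem exists_eq_rpow_add_rpow (hG : IsPosCocycle G)
    (hsymm : ∀ p q : ℝ, 0 < p → 0 < q → G p q = G q p) {α : ℝ} (hH : IsPosHomogeneous α G)
    (hα : α ≠ 1) :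
    ∃ a : ℝ, ∀ x : ℝ, 0 < x → x < 1 → G x (1 - x) = a * (x ^ α + (1 - x) ^ α - 1) := by
  have hden : 2 * (1 / 2 : ℝ) ^ α - 1 ≠ 0 := by
    have : (1 / 2 : ℝ) ^ α ≠ (1 / 2) ^ (1 : ℝ) := by
      rw [Ne, rpow_right_inj (by norm_num) (by norm_num)]
      exact hα
    rw [rpow_one] at this
    contrapose! this
    linarith
  set K := G (1 / 2) (1 / 2)
  refine ⟨K / (2 * (1 / 2 : ℝ) ^ α - 1), fun x hx₀ hx₁ => ?_⟩
  have hy : 0 < 1 - x := by linarith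
  have key := hG.two_mul_apply hsymm (u := x / 2) (v := (1 - x) / 2) (by positivity) (by positivity)
  have hx : G (x / 2) (x / 2) = x ^ α * K := by
    simpa only [mul_one_div] using hH x (1 / 2) (1 / 2) hx₀ (by norm_num) (by norm_num)
  have hy' : G ((1 - x) / 2) ((1 - x) / 2) = (1 - x) ^ α * K := by
    simpa only [mul_one_div] using hH (1 - x) (1 / 2) (1 / 2) hy (by norm_num) (by norm_num)
  have hxy : G (x / 2) ((1 - x) / 2) = (1 / 2 : ℝ) ^ α * G x (1 - x) := by
    simpa only [one_div_mul_eq_div] using hH (1 / 2) x (1 - x) (by norm_num) hx₀ hy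
  rw [add_halves, add_halves, show x / 2 + (1 - x) / 2 = 1 / 2 by ring, hx, hy', hxy] at key
  field_simp
  linear_combination key

end IsPosCocycle

theorem stmt10 (α : ℝ) (hα : α < 0) (f : ℝ → ℝ)
    (h : ∀ x y : ℝ, 0 < x → 0 < y → x + y < 1 →
      f x + (1 - x) ^ α * f (y / (1 - x)) = f y + (1 - y) ^ α * f (x / (1 - y))) :
    ∃ a b : ℝ, ∀ x : ℝ, 0 < x → x < 1 →
      f x = a * x ^ α + b * (1 - x) ^ α - b := by
  have hE := homogeneousFEI_homogenize h
  have hH := isPosHomogeneous_homogenize α f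
  obtain ⟨c, hsymm⟩ := hE.exists_symm hH hα.ne
  obtain ⟨a, ha⟩ := ((hE.sub_rpow c).isPosCocycle hsymm).exists_eq_rpow_add_rpow hsymm
    (hH.sub_rpow c) (by linarith)
  refine ⟨a, a + c, fun x hx₀ hx₁ => ?_⟩
  have hx := ha x hx₀ hx₁
  simp only [homogenize_self_one_sub, add_sub_cancel, one_rpow] at hx
  linear_combination hx
end

section
/- Let α < 0, ε ≥ 0, and let f : [0,1] → ℝ satisfy |f(x) + (1-x)^α f(y/(1-x)) - f(y) - (1-y)^α f(x/(1-y))| ≤ ε for all x, y ∈ [0,1) with x + y ≤ 1. Suppose a, b ∈ ℝ are such that |f(x) - (a x^α + b(1-x)^α - b)| ≤ 15ε for all x ∈ (0,1). Then f(1) = a - b. -/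
/-!
Putting `y = 1 - x` in the approximate functional equation gives
`f x - f (1 - x) ≈ f 1 * (x ^ α - (1 - x) ^ α)`, while the approximation by
`a x ^ α + b (1 - x) ^ α - b` gives `f x - f (1 - x) ≈ (a - b) * (x ^ α - (1 - x) ^ α)`.
Hence `(a - b - f 1) * (x ^ α - (1 - x) ^ α)` stays bounded on `(0, 1)`; since `α < 0`, the
factor `x ^ α - (1 - x) ^ α` blows up as `x → 0⁺`, which forces `f 1 = a - b`.
-/

open Filter Topology Set

lemma tendsto_rpow_sub_one_sub_rpow_nhdsGT_zero {α : ℝ} (hα : α < 0) :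
    Tendsto (fun x : ℝ => x ^ α - (1 - x) ^ α) (𝓝[>] 0) atTop := by
  have hcont : Tendsto (fun x : ℝ => (1 - x) ^ α) (𝓝[>] 0) (𝓝 ((1 - 0) ^ α)) :=
    ((continuous_const.sub continuous_id).continuousAt.rpow_const
      (Or.inl (by norm_num))).tendsto.mono_left nhdsWithin_le_nhds
  simpa only [sub_eq_add_neg] using (tendsto_rpow_neg_nhdsGT_zero hα).atTop_add hcont.neg

lemma eq_zero_of_abs_mul_le_of_tendsto_atTop {ι : Type*} {l : Filter ι} [l.NeBot]
    {g : ι → ℝ} (hg : Tendsto g l atTop) {c C : ℝ} (hbound : ∀ᶠ i in l, |c * g i| ≤ C) :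
    c = 0 := by
  by_contra hc
  have hgrow : Tendsto (fun i => |c| * |g i|) l atTop :=
    (tendsto_abs_atTop_atTop.comp hg).const_mul_atTop (abs_pos.mpr hc)
  obtain ⟨i, hi_gt, hi_le⟩ := ((hgrow.eventually_gt_atTop C).and hbound).exists
  rw [abs_mul] at hi_le
  exact hi_le.not_gt hi_gt

lemma abs_sub_sub_mul_rpow_sub_rpow_le {α ε : ℝ} {f : ℝ → ℝ}
    (h : ∀ x y : ℝ, 0 ≤ x → x < 1 → 0 ≤ y → y < 1 → x + y ≤ 1 →
      |f x + (1 - x) ^ α * f (y / (1 - x)) - f y - (1 - y) ^ α * f (x / (1 - y))| ≤ ε)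
    {x : ℝ} (hx₀ : 0 < x) (hx₁ : x < 1) :
    |f x - f (1 - x) - f 1 * (x ^ α - (1 - x) ^ α)| ≤ ε := by
  have hsym := h x (1 - x) hx₀.le hx₁ (by linarith) (by linarith) (by linarith)
  rw [sub_sub_cancel, div_self (sub_pos.mpr hx₁).ne', div_self hx₀.ne'] at hsym
  convert hsym using 2
  ring

lemma abs_mul_rpow_sub_rpow_le {α ε a b : ℝ} {f : ℝ → ℝ}
    (h : ∀ x y : ℝ, 0 ≤ x → x < 1 → 0 ≤ y → y < 1 → x + y ≤ 1 →
      |f x + (1 - x) ^ α * f (y / (1 - x)) - f y - (1 - y) ^ α * f (x / (1 - y))| ≤ ε)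
    (hab : ∀ x : ℝ, 0 < x → x < 1 →
      |f x - (a * x ^ α + b * (1 - x) ^ α - b)| ≤ 15 * ε)
    {x : ℝ} (hx₀ : 0 < x) (hx₁ : x < 1) :
    |(a - b - f 1) * (x ^ α - (1 - x) ^ α)| ≤ 31 * ε := by
  have hsym := abs_sub_sub_mul_rpow_sub_rpow_le h hx₀ hx₁
  have hx := hab x hx₀ hx₁
  have hx' := hab (1 - x) (by linarith) (by linarith)
  rw [sub_sub_cancel] at hx'
  calc |(a - b - f 1) * (x ^ α - (1 - x) ^ α)|
      = |(f x - f (1 - x) - f 1 * (x ^ α - (1 - x) ^ α))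
          + -(f x - (a * x ^ α + b * (1 - x) ^ α - b))
          + (f (1 - x) - (a * (1 - x) ^ α + b * x ^ α - b))| := by congr 1; ring
    _ ≤ |f x - f (1 - x) - f 1 * (x ^ α - (1 - x) ^ α)|
          + |-(f x - (a * x ^ α + b * (1 - x) ^ α - b))|
          + |f (1 - x) - (a * (1 - x) ^ α + b * x ^ α - b)| := abs_add_three _ _ _
    _ ≤ 31 * ε := by rw [abs_neg]; linarith

theorem stmt13_general (α ε : ℝ) (hα : α < 0) (f : ℝ → ℝ)
    (h : ∀ x y : ℝ, 0 ≤ x → x < 1 → 0 ≤ y → y < 1 → x + y ≤ 1 →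
      |f x + (1 - x) ^ α * f (y / (1 - x)) - f y - (1 - y) ^ α * f (x / (1 - y))| ≤ ε)
    (a b : ℝ)
    (hab : ∀ x : ℝ, 0 < x → x < 1 →
      |f x - (a * x ^ α + b * (1 - x) ^ α - b)| ≤ 15 * ε) :
    f 1 = a - b := by
  have hbound : ∀ᶠ x in 𝓝[>] (0 : ℝ), |(a - b - f 1) * (x ^ α - (1 - x) ^ α)| ≤ 31 * ε := by
    filter_upwards [Ioo_mem_nhdsGT one_pos] with x hx
    exact abs_mul_rpow_sub_rpow_le h hab hx.1 hx.2
  have hzero := eq_zero_of_abs_mul_le_of_tendsto_atTop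
    (tendsto_rpow_sub_one_sub_rpow_nhdsGT_zero hα) hbound
  linarith

theorem stmt13 (α ε : ℝ) (hα : α < 0) (hε : 0 ≤ ε) (f : ℝ → ℝ)
    (h : ∀ x y : ℝ, 0 ≤ x → x < 1 → 0 ≤ y → y < 1 → x + y ≤ 1 →
      |f x + (1 - x) ^ α * f (y / (1 - x)) - f y - (1 - y) ^ α * f (x / (1 - y))| ≤ ε)
    (a b : ℝ)
    (hab : ∀ x : ℝ, 0 < x → x < 1 →
      |f x - (a * x ^ α + b * (1 - x) ^ α - b)| ≤ 15 * ε) :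
    f 1 = a - b :=
  stmt13_general α ε hα f h a b hab
end

section
/- Let α < 0, ε ≥ 0, and f : [0,1] → ℝ satisfy |f(x) + (1-x)^α f(y/(1-x)) - f(y) - (1-y)^α f(x/(1-y))| ≤ ε for all x, y ∈ [0,1) with x + y ≤ 1. Then there exist a, b ∈ ℝ such that the function h₁ with h₁(0) = 0, h₁(x) = a x^α + b(1-x)^α - b for x ∈ (0,1), h₁(1) = a - b, satisfies the parametric fundamental equation of information exactly on D, and |f(x) - h₁(x)| ≤ 15ε for all x ∈ [0,1]. -/
/-!
For `α < 0` an approximate solution is already an exact one. Taking `y = 0` gives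
`|f 0| * |s ^ α - 1| ≤ ε` for every `s ∈ (0, 1)`, so `f 0 = 0` because `s ^ α → ∞` as `s → 0⁺`.
In homogeneous form `D m u v = m ^ α * defect (u / m) (v / m)` the defect satisfies a five-term
cocycle identity expressing `D t (p t) (q t) = t ^ α * defect p q` through five defects at scales
`m ≥ 1 / 2`, each at most `(1 / 2) ^ α * ε`. Hence `t ^ α * |defect p q|` stays bounded as
`t → 0⁺`, and the defect vanishes on the interior of the domain. An exact solution is regular:
`f - f 1 * x ^ α` is invariant under `x ↦ 1 - x`, and comparing three instances of the equation
shows that it is proportional to `x ^ α + (1 - x) ^ α - 1`.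
-/

open Filter Topology Set Real

namespace InformationEquation

noncomputable def defect (α : ℝ) (f : ℝ → ℝ) (x y : ℝ) : ℝ :=
  f x + (1 - x) ^ α * f (y / (1 - x)) - f y - (1 - y) ^ α * f (x / (1 - y))

noncomputable def homogenize (α : ℝ) (f : ℝ → ℝ) (m u : ℝ) : ℝ :=
  m ^ α * f (u / m)

def homDefect (H : ℝ → ℝ → ℝ) (m u v : ℝ) : ℝ :=
  H m u + H (m - u) v - H m v - H (m - v) u

theorem homDefect_cocycle (H : ℝ → ℝ → ℝ) (m x y z : ℝ) :
    homDefect H (m - x) y z = homDefect H m x y + homDefect H (m - y) x z + homDefect H m y z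
      + homDefect H (m - z) y x + homDefect H m z x := by
  simp only [homDefect]
  rw [show m - y - x = m - x - y by ring, show m - z - y = m - y - z by ring,
    show m - z - x = m - x - z by ring]
  ring

theorem rpow_mul_rpow_div {α m u : ℝ} (hm : 0 < m) (hu : 0 ≤ u) : m ^ α * (u / m) ^ α = u ^ α := by
  rw [div_rpow hu hm.le, mul_div_cancel₀ _ (rpow_pos_of_pos hm α).ne']

theorem homDefect_homogenize {α m u v : ℝ} (f : ℝ → ℝ) (hm : 0 < m) (hu : u < m) (hv : v < m) :
    homDefect (homogenize α f) m u v = m ^ α * defect α f (u / m) (v / m) := by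
  have hmu : 0 < m - u := sub_pos.2 hu
  have hmv : 0 < m - v := sub_pos.2 hv
  have e₁ : 1 - u / m = (m - u) / m := by field_simp
  have e₂ : 1 - v / m = (m - v) / m := by field_simp
  simp only [homDefect, homogenize, defect]
  rw [e₁, e₂, div_div_div_cancel_right₀ hm.ne', div_div_div_cancel_right₀ hm.ne']
  linear_combination f (u / (m - v)) * rpow_mul_rpow_div (α := α) hm hmv.le
    - f (v / (m - u)) * rpow_mul_rpow_div (α := α) hm hmu.le

theorem eq_zero_of_abs_mul_rpow_le {α c C : ℝ} (hα : α < 0)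
    (h : ∀ᶠ t in 𝓝[>] (0 : ℝ), |c| * t ^ α ≤ C) : c = 0 := by
  by_contra hc
  have hlim : Tendsto (fun t : ℝ => |c| * t ^ α) (𝓝[>] 0) atTop :=
    (tendsto_rpow_neg_nhdsGT_zero hα).const_mul_atTop (abs_pos.2 hc)
  obtain ⟨t, hle, hgt⟩ := (h.and (hlim.eventually_gt_atTop C)).exists
  exact hle.not_gt hgt

section Approximate

variable {α ε : ℝ} {f : ℝ → ℝ}
  (h : ∀ x y, 0 ≤ x → x < 1 → 0 ≤ y → y < 1 → x + y ≤ 1 → |defect α f x y| ≤ ε)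
include h

theorem apply_zero_eq_zero (hα : α < 0) : f 0 = 0 := by
  refine eq_zero_of_abs_mul_rpow_le (C := ε + |f 0|) hα ?_
  filter_upwards [Ioo_mem_nhdsGT one_pos] with s ⟨hs, hs1⟩
  have hdef : defect α f (1 - s) 0 = f 0 * (s ^ α - 1) := by
    simp only [defect, sub_sub_cancel, zero_div, sub_zero, one_rpow, div_one]
    ring
  have hbound := h (1 - s) 0 (by linarith) (by linarith) le_rfl one_pos (by linarith)
  have hs' : 1 < s ^ α := one_lt_rpow_of_pos_of_lt_one_of_neg hs hs1 hα
  rw [hdef, abs_mul, abs_of_pos (sub_pos.2 hs')] at hbound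
  linarith

theorem abs_homDefect_le {m u v : ℝ} (hm : 0 < m) (hu : 0 ≤ u) (hv : 0 ≤ v) (huv : u + v ≤ m)
    (hum : u < m) (hvm : v < m) : |homDefect (homogenize α f) m u v| ≤ m ^ α * ε := by
  rw [homDefect_homogenize f hm hum hvm, abs_mul, abs_of_pos (rpow_pos_of_pos hm α)]
  gcongr
  exact h _ _ (by positivity) ((div_lt_one hm).2 hum) (by positivity) ((div_lt_one hm).2 hvm)
    (by rw [← add_div, div_le_one hm]; exact huv)

theorem rpow_mul_abs_defect_le (hα : α < 0) (hε : 0 ≤ ε) {p q t : ℝ} (hp : 0 < p) (hq : 0 < q)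
    (hpq : p + q ≤ 1) (ht : 0 < t) (ht2 : t ≤ 1 / 2) :
    t ^ α * |defect α f p q| ≤ (3 + 2 * (1 / 2) ^ α) * ε := by
  set H := homogenize α f
  have hpt : p * t < t := by nlinarith
  have hqt : q * t < t := by nlinarith
  have hsum : p * t + q * t ≤ t := by nlinarith
  have hscaled : homDefect H t (p * t) (q * t) = t ^ α * defect α f p q := by
    rw [homDefect_homogenize f ht hpt hqt, mul_div_cancel_right₀ _ ht.ne',
      mul_div_cancel_right₀ _ ht.ne']
  have hcoc := homDefect_cocycle H 1 (1 - t) (p * t) (q * t)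
  rw [sub_sub_cancel, hscaled] at hcoc
  have hhalf : ∀ m : ℝ, 1 / 2 ≤ m → m ^ α * ε ≤ (1 / 2) ^ α * ε := fun m hm =>
    mul_le_mul_of_nonneg_right (rpow_le_rpow_of_nonpos (by norm_num) hm hα.le) hε
  have B₁ := abs_homDefect_le h (m := 1) (u := 1 - t) (v := p * t) one_pos (by linarith)
    (by positivity) (by linarith) (by linarith) (by linarith)
  have B₂ := abs_homDefect_le h (m := 1 - p * t) (u := 1 - t) (v := q * t) (by linarith)
    (by linarith) (by positivity) (by linarith) (by linarith) (by linarith)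
  have B₃ := abs_homDefect_le h (m := 1) (u := p * t) (v := q * t) one_pos (by positivity)
    (by positivity) (by linarith) (by linarith) (by linarith)
  have B₄ := abs_homDefect_le h (m := 1 - q * t) (u := p * t) (v := 1 - t) (by linarith)
    (by positivity) (by linarith) (by linarith) (by linarith) (by linarith)
  have B₅ := abs_homDefect_le h (m := 1) (u := q * t) (v := 1 - t) one_pos (by positivity)
    (by linarith) (by linarith) (by linarith) (by linarith)
  have h₂ := hhalf (1 - p * t) (by linarith)
  have h₄ := hhalf (1 - q * t) (by linarith)
  rw [one_rpow, one_mul] at B₁ B₃ B₅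
  rw [← abs_of_pos (rpow_pos_of_pos ht α), ← abs_mul, hcoc]
  refine abs_le.2 ⟨?_, ?_⟩ <;>
  · linarith [abs_le.1 B₁, abs_le.1 B₂, abs_le.1 B₃, abs_le.1 B₄, abs_le.1 B₅]

theorem defect_eq_zero_of_abs_defect_le (hα : α < 0) (hε : 0 ≤ ε) {p q : ℝ} (hp : 0 < p)
    (hq : 0 < q) (hpq : p + q ≤ 1) : defect α f p q = 0 := by
  refine eq_zero_of_abs_mul_rpow_le (C := (3 + 2 * (1 / 2) ^ α) * ε) hα ?_
  filter_upwards [Ioc_mem_nhdsGT (by norm_num : (0 : ℝ) < 1 / 2)] with t ⟨ht, ht2⟩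
  rw [mul_comm]
  exact rpow_mul_abs_defect_le h hα hε hp hq hpq ht ht2

end Approximate

theorem defect_rpow_eq_zero {α x y : ℝ} (hx0 : 0 ≤ x) (hx : x < 1) (hy0 : 0 ≤ y) (hy : y < 1) :
    defect α (· ^ α) x y = 0 := by
  simp only [defect]
  rw [rpow_mul_rpow_div (sub_pos.2 hx) hy0, rpow_mul_rpow_div (sub_pos.2 hy) hx0]
  ring

theorem defect_one_sub_rpow_sub_one_eq_zero {α x y : ℝ} (hx : x < 1) (hy : y < 1)
    (hxy : x + y ≤ 1) : defect α (fun w => (1 - w) ^ α - 1) x y = 0 := by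
  have hx' : 1 - x ≠ 0 := (sub_pos.2 hx).ne'
  have hy' : 1 - y ≠ 0 := (sub_pos.2 hy).ne'
  have e₁ : 1 - y / (1 - x) = (1 - x - y) / (1 - x) := by field_simp
  have e₂ : 1 - x / (1 - y) = (1 - x - y) / (1 - y) := by field_simp; ring
  simp only [defect]
  rw [e₁, e₂]
  linear_combination rpow_mul_rpow_div (α := α) (sub_pos.2 hx) (by linarith : 0 ≤ 1 - x - y)
    - rpow_mul_rpow_div (α := α) (sub_pos.2 hy) (by linarith : 0 ≤ 1 - x - y)

theorem defect_regular_eq_zero {α x y : ℝ} (a b : ℝ) (hx0 : 0 ≤ x) (hx : x < 1) (hy0 : 0 ≤ y)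
    (hy : y < 1) (hxy : x + y ≤ 1) :
    defect α (fun t => a * t ^ α + b * ((1 - t) ^ α - 1)) x y = 0 := by
  have hlin : defect α (fun t => a * t ^ α + b * ((1 - t) ^ α - 1)) x y
      = a * defect α (· ^ α) x y + b * defect α (fun w => (1 - w) ^ α - 1) x y := by
    simp only [defect]
    ring
  rw [hlin, defect_rpow_eq_zero hx0 hx hy0 hy, defect_one_sub_rpow_sub_one_eq_zero hx hy hxy]
  ring

section Exact

variable {α : ℝ}

theorem apply_one_sub_sub_eq {f : ℝ → ℝ}
    (hF : ∀ x y, 0 < x → 0 < y → x + y ≤ 1 → defect α f x y = 0) {p : ℝ} (hp : 0 < p)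
    (hp1 : p < 1) : f (1 - p) - f 1 * (1 - p) ^ α = f p - f 1 * p ^ α := by
  have hE := hF p (1 - p) hp (by linarith) (by linarith)
  simp only [defect, sub_sub_cancel, div_self (sub_pos.2 hp1).ne', div_self hp.ne'] at hE
  linear_combination -hE

variable {g : ℝ → ℝ} (hF : ∀ x y, 0 < x → 0 < y → x + y ≤ 1 → defect α g x y = 0)
  (hsymm : ∀ p, 0 < p → p < 1 → g (1 - p) = g p)
include hF hsymm

theorem apply_mul_add_rpow_mul_eq {x u : ℝ} (hx : 0 < x) (hx1 : x < 1) (hu : 0 < u)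
    (hu1 : u < 1) :
    g (x * u) + (1 - x * u) ^ α * g (x * (1 - u) / (1 - x * u)) = g x + x ^ α * g u := by
  have hu' : 0 < 1 - u := by linarith
  have hxu : 0 < 1 - x * u := by nlinarith
  have hb : 0 < x * (1 - u) / (1 - x * u) := by positivity
  have hb1 : x * (1 - u) / (1 - x * u) < 1 := by rw [div_lt_one hxu]; nlinarith
  have e : (1 - x) / (1 - x * u) = 1 - x * (1 - u) / (1 - x * u) := by field_simp; ring
  have hE := hF (x * u) (1 - x) (by positivity) (by linarith) (by nlinarith)
  simp only [defect, sub_sub_cancel, mul_div_cancel_left₀ u hx.ne', e, hsymm _ hb hb1,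
    hsymm x hx hx1] at hE
  linear_combination hE

theorem mul_rpow_add_rpow_sub_one_comm {x u : ℝ} (hx : 0 < x) (hx1 : x < 1) (hu : 0 < u)
    (hu1 : u < 1) :
    g x * (u ^ α + (1 - u) ^ α - 1) = g u * (x ^ α + (1 - x) ^ α - 1) := by
  have hx' : 0 < 1 - x := by linarith
  have hu' : 0 < 1 - u := by linarith
  have hxu : 0 < 1 - x * u := by nlinarith
  have E₁ := apply_mul_add_rpow_mul_eq hF hsymm hx hx1 hu hu1
  have E₂ := apply_mul_add_rpow_mul_eq hF hsymm hu hu1 hx hx1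
  rw [mul_comm u x] at E₂
  -- a third instance, at scale `1 - x * u`, relates the mixed terms of `E₁` and `E₂`
  have E₃ : homDefect (homogenize α g) (1 - x * u) (x * (1 - u)) (u * (1 - x)) = 0 := by
    rw [homDefect_homogenize g hxu (by nlinarith) (by nlinarith), hF _ _ (by positivity)
      (by positivity) (by rw [← add_div, div_le_one hxu]; nlinarith), mul_zero]
  simp only [homDefect, homogenize] at E₃
  rw [show 1 - x * u - x * (1 - u) = 1 - x by ring, show 1 - x * u - u * (1 - x) = 1 - u by ring,
    mul_div_cancel_right₀ u hx'.ne', mul_div_cancel_right₀ x hu'.ne'] at E₃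
  linear_combination E₁ - E₂ - E₃

theorem exists_eq_mul_rpow_add_rpow_sub_one (hα : α ≠ 1) :
    ∃ b, ∀ x, 0 < x → x < 1 → g x = b * (x ^ α + (1 - x) ^ α - 1) := by
  have hden : (1 / 2 : ℝ) ^ α + (1 - 1 / 2) ^ α - 1 ≠ 0 := by
    intro h0
    have : (1 / 2 : ℝ) ^ α = (1 / 2) ^ (1 : ℝ) := by norm_num at h0 ⊢; linarith
    exact hα ((rpow_right_inj (by norm_num) (by norm_num)).1 this)
  refine ⟨g (1 / 2) / ((1 / 2) ^ α + (1 - 1 / 2) ^ α - 1), fun x hx hx1 => ?_⟩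
  have := mul_rpow_add_rpow_sub_one_comm hF hsymm hx hx1 (u := 1 / 2) (by norm_num) (by norm_num)
  rw [div_mul_eq_mul_div, eq_div_iff hden]
  linear_combination this

end Exact

theorem exists_eq_regular_of_defect_eq_zero {α : ℝ} {f : ℝ → ℝ} (hα0 : α ≠ 0) (hα1 : α ≠ 1)
    (hF : ∀ x y, 0 < x → 0 < y → x + y ≤ 1 → defect α f x y = 0) (hf0 : f 0 = 0) :
    ∃ b, ∀ x, 0 ≤ x → x ≤ 1 → f x = (f 1 + b) * x ^ α + b * ((1 - x) ^ α - 1) := by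
  set g : ℝ → ℝ := fun w => f w - f 1 * w ^ α with hg
  have hFg : ∀ x y, 0 < x → 0 < y → x + y ≤ 1 → defect α g x y = 0 := by
    intro x y hx hy hxy
    have hlin : defect α g x y = defect α f x y - f 1 * defect α (· ^ α) x y := by
      simp only [hg, defect]
      ring
    rw [hlin, hF x y hx hy hxy, defect_rpow_eq_zero hx.le (by linarith) hy.le (by linarith)]
    ring
  obtain ⟨b, hb⟩ := exists_eq_mul_rpow_add_rpow_sub_one hFg
    (fun p hp hp1 => apply_one_sub_sub_eq hF hp hp1) hα1
  refine ⟨b, fun x hx0 hx1 => ?_⟩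
  rcases hx0.eq_or_lt with rfl | hx0
  · simp [hf0, zero_rpow hα0]
  rcases hx1.eq_or_lt with rfl | hx1
  · simp [zero_rpow hα0]
  have := hb x hx0 hx1
  simp only [hg] at this
  linear_combination this

end InformationEquation

open InformationEquation

theorem stmt14 (α ε : ℝ) (hα : α < 0) (hε : 0 ≤ ε) (f : ℝ → ℝ)
    (h : ∀ x y : ℝ, 0 ≤ x → x < 1 → 0 ≤ y → y < 1 → x + y ≤ 1 →
      |f x + (1 - x) ^ α * f (y / (1 - x)) - f y - (1 - y) ^ α * f (x / (1 - y))| ≤ ε) :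
    ∃ (a b : ℝ) (h₁ : ℝ → ℝ),
      h₁ 0 = 0 ∧
      (∀ x : ℝ, 0 < x → x < 1 → h₁ x = a * x ^ α + b * (1 - x) ^ α - b) ∧
      h₁ 1 = a - b ∧
      (∀ x y : ℝ, 0 ≤ x → x < 1 → 0 ≤ y → y < 1 → x + y ≤ 1 →
        h₁ x + (1 - x) ^ α * h₁ (y / (1 - x)) = h₁ y + (1 - y) ^ α * h₁ (x / (1 - y))) ∧
      ∀ x : ℝ, 0 ≤ x → x ≤ 1 → |f x - h₁ x| ≤ 15 * ε := by
  obtain ⟨b, hb⟩ := exists_eq_regular_of_defect_eq_zero hα.ne (hα.trans one_pos).ne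
    (fun p q hp hq hpq => defect_eq_zero_of_abs_defect_le h hα hε hp hq hpq)
    (apply_zero_eq_zero h hα)
  -- with Lean's `0 ^ α = 0` one formula covers the endpoints as well
  refine ⟨f 1 + b, b, fun t => (f 1 + b) * t ^ α + b * ((1 - t) ^ α - 1),
    by simp [zero_rpow hα.ne], fun x _ _ => by beta_reduce; ring, by simp [zero_rpow hα.ne],
    fun x y hx hx1 hy hy1 hxy => ?_, fun x hx hx1 => ?_⟩
  · have := defect_regular_eq_zero (α := α) (f 1 + b) b hx hx1 hy hy1 hxy
    simp only [defect] at this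
    linear_combination this
  · rw [hb x hx hx1, sub_self, abs_zero]
    positivity
end

section
/- Let ε ≥ 0 and f : [0,1] → ℝ satisfy |f(x) + f(y/(1-x)) - f(y) - f(x/(1-y))| ≤ ε for all x, y ∈ [0,1) with x + y ≤ 1. Then there exist a, b, c ∈ ℝ such that the function h₂ with h₂(0) = a, h₂(x) = c for x ∈ (0,1), h₂(1) = b satisfies the equation exactly on D, and |f(x) - h₂(x)| ≤ 63ε for all x ∈ [0,1]. -/
/-!
Putting `y = 1 - x` in the equation gives `f t ≈ f (1 - t)` on `(0, 1)`. Adding the equation at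
`(p, q (1 - p))`, this symmetry and the equation at `(q (1 - p), (1 - p) (1 - q))` shows that
`f (q (1 - p) / s)`, where `s = 1 - (1 - p) (1 - q)`, is within `3ε` of
`f p + f q - f ((1 - p) (1 - q))`, which is symmetric in `p` and `q`. Every pair `a, b > 0` with
`a + b < 1` is `(q (1 - p) / s, p (1 - q) / s)` for some `p, q ∈ (0, 1)`, so `|f a - f b| ≤ 6ε`;
with the symmetry, `f` is within `7ε` of `f (1/4)` on `(0, 1)`. The values at `0` and `1` are
kept as they are.
-/

theorem exists_eq_div_of_add_lt_one {a b : ℝ} (ha : 0 < a) (hb : 0 < b) (hab : a + b < 1) :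
    ∃ p q : ℝ, 0 < p ∧ p < 1 ∧ 0 < q ∧ q < 1 ∧
      a = q * (1 - p) / (1 - (1 - p) * (1 - q)) ∧ b = p * (1 - q) / (1 - (1 - p) * (1 - q)) := by
  have ha1 : 0 < 1 - a := by linarith
  have hb1 : 0 < 1 - b := by linarith
  have hs : 0 < 1 - a - b := by linarith
  have hden : 1 - (1 - (1 - a - b) / (1 - b)) * (1 - (1 - a - b) / (1 - a))
      = (1 - a - b) / ((1 - a) * (1 - b)) := by
    field_simp
    ring
  refine ⟨(1 - a - b) / (1 - b), (1 - a - b) / (1 - a), div_pos hs hb1,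
    (div_lt_one hb1).mpr (by linarith), div_pos hs ha1, (div_lt_one ha1).mpr (by linarith),
    ?_, ?_⟩
  all_goals
    rw [hden]
    field_simp
    ring

def ApproxSolvesFundamentalEq (f : ℝ → ℝ) (ε : ℝ) : Prop :=
  ∀ x y : ℝ, 0 ≤ x → x < 1 → 0 ≤ y → y < 1 → x + y ≤ 1 →
    |f x + f (y / (1 - x)) - f y - f (x / (1 - y))| ≤ ε

namespace ApproxSolvesFundamentalEq

variable {f : ℝ → ℝ} {ε : ℝ} (hf : ApproxSolvesFundamentalEq f ε)
include hf

theorem nonneg : 0 ≤ ε := by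
  simpa using hf 0 0 le_rfl one_pos le_rfl one_pos (by norm_num)

theorem abs_sub_one_sub_le {t : ℝ} (ht0 : 0 < t) (ht1 : t < 1) : |f t - f (1 - t)| ≤ ε := by
  have h := hf t (1 - t) ht0.le ht1 (by linarith) (by linarith) (by linarith)
  rw [div_self (by linarith), sub_sub_cancel, div_self ht0.ne'] at h
  convert h using 2
  ring

theorem abs_add_sub_sub_le {p q : ℝ} (hp0 : 0 < p) (hp1 : p < 1) (hq0 : 0 < q) (hq1 : q < 1) :
    |f p + f q - f ((1 - p) * (1 - q)) - f (q * (1 - p) / (1 - (1 - p) * (1 - q)))| ≤ 3 * ε := by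
  have hpq : 0 < (1 - p) * (1 - q) := mul_pos (by linarith) (by linarith)
  have hy0 : 0 < q * (1 - p) := mul_pos hq0 (by linarith)
  have hy1 : q * (1 - p) < 1 := by nlinarith
  have hd : 0 < 1 - q * (1 - p) := by linarith
  have hw0 : 0 < p / (1 - q * (1 - p)) := div_pos hp0 hd
  have hw1 : p / (1 - q * (1 - p)) < 1 := (div_lt_one hd).mpr (by linarith)
  have hE₁ := hf p (q * (1 - p)) hp0.le hp1 hy0.le hy1 (by nlinarith)
  have hS := hf.abs_sub_one_sub_le hw0 hw1
  have hE₂ := hf (q * (1 - p)) ((1 - p) * (1 - q)) hy0.le hy1 hpq.le (by nlinarith) (by nlinarith)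
  rw [mul_div_cancel_right₀ q (by linarith : 1 - p ≠ 0)] at hE₁
  rw [show 1 - p / (1 - q * (1 - p)) = (1 - p) * (1 - q) / (1 - q * (1 - p)) by
    field_simp; ring] at hS
  rw [abs_le] at *
  constructor <;> linarith

theorem abs_sub_div_le {p q : ℝ} (hp0 : 0 < p) (hp1 : p < 1) (hq0 : 0 < q) (hq1 : q < 1) :
    |f (q * (1 - p) / (1 - (1 - p) * (1 - q))) - f (p * (1 - q) / (1 - (1 - p) * (1 - q)))|
      ≤ 6 * ε := by
  have hpq := hf.abs_add_sub_sub_le hp0 hp1 hq0 hq1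
  have hqp := hf.abs_add_sub_sub_le hq0 hq1 hp0 hp1
  rw [mul_comm (1 - q)] at hqp
  rw [abs_le] at *
  constructor <;> linarith

theorem abs_sub_le_of_add_lt_one {a b : ℝ} (ha : 0 < a) (hb : 0 < b) (hab : a + b < 1) :
    |f a - f b| ≤ 6 * ε := by
  obtain ⟨p, q, hp0, hp1, hq0, hq1, rfl, rfl⟩ := exists_eq_div_of_add_lt_one ha hb hab
  exact hf.abs_sub_div_le hp0 hp1 hq0 hq1

theorem abs_sub_quarter_le {t : ℝ} (ht0 : 0 < t) (ht1 : t < 1) :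
    |f t - f (1 / 4)| ≤ 7 * ε := by
  rcases lt_or_ge t (3 / 4) with ht | ht
  · have := hf.abs_sub_le_of_add_lt_one ht0 (by norm_num : (0 : ℝ) < 1 / 4) (by linarith)
    linarith [hf.nonneg]
  · calc |f t - f (1 / 4)| ≤ |f t - f (1 - t)| + |f (1 - t) - f (1 / 4)| := abs_sub_le _ _ _
      _ ≤ ε + 6 * ε := add_le_add (hf.abs_sub_one_sub_le ht0 ht1)
          (hf.abs_sub_le_of_add_lt_one (by linarith) (by norm_num) (by linarith))
      _ = 7 * ε := by ring

end ApproxSolvesFundamentalEq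

noncomputable def stepFn (a b c : ℝ) (x : ℝ) : ℝ :=
  if x = 0 then a else if x = 1 then b else c

@[simp] theorem stepFn_zero (a b c : ℝ) : stepFn a b c 0 = a := if_pos rfl

@[simp] theorem stepFn_one (a b c : ℝ) : stepFn a b c 1 = b := by simp [stepFn]

theorem stepFn_of_pos_of_lt_one (a b c : ℝ) {x : ℝ} (hx0 : 0 < x) (hx1 : x < 1) :
    stepFn a b c x = c := by
  simp [stepFn, hx0.ne', hx1.ne]

theorem stepFn_add_div_eq (a b c : ℝ) {x y : ℝ} (hx : 0 ≤ x) (hx1 : x < 1) (hy : 0 ≤ y)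
    (hy1 : y < 1) (hxy : x + y ≤ 1) :
    stepFn a b c x + stepFn a b c (y / (1 - x)) = stepFn a b c y + stepFn a b c (x / (1 - y)) := by
  rcases hx.eq_or_lt with rfl | hx0
  · simp [add_comm]
  rcases hy.eq_or_lt with rfl | hy0
  · simp [add_comm]
  have hx' : 0 < 1 - x := by linarith
  have hy' : 0 < 1 - y := by linarith
  rw [stepFn_of_pos_of_lt_one a b c hx0 hx1, stepFn_of_pos_of_lt_one a b c hy0 hy1]
  rcases hxy.eq_or_lt with hxy | hxy
  · rw [show y / (1 - x) = 1 by rw [div_eq_one_iff_eq hx'.ne']; linarith,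
      show x / (1 - y) = 1 by rw [div_eq_one_iff_eq hy'.ne']; linarith]
  · rw [stepFn_of_pos_of_lt_one a b c (div_pos hy0 hx') ((div_lt_one hx').mpr (by linarith)),
      stepFn_of_pos_of_lt_one a b c (div_pos hx0 hy') ((div_lt_one hy').mpr (by linarith))]

theorem stmt15_general (ε : ℝ) (f : ℝ → ℝ)
    (h : ∀ x y : ℝ, 0 ≤ x → x < 1 → 0 ≤ y → y < 1 → x + y ≤ 1 →
      |f x + f (y / (1 - x)) - f y - f (x / (1 - y))| ≤ ε) :
    ∃ (a b c : ℝ) (h₂ : ℝ → ℝ),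
      h₂ 0 = a ∧
      (∀ x : ℝ, 0 < x → x < 1 → h₂ x = c) ∧
      h₂ 1 = b ∧
      (∀ x y : ℝ, 0 ≤ x → x < 1 → 0 ≤ y → y < 1 → x + y ≤ 1 →
        h₂ x + h₂ (y / (1 - x)) = h₂ y + h₂ (x / (1 - y))) ∧
      ∀ x : ℝ, 0 ≤ x → x ≤ 1 → |f x - h₂ x| ≤ 63 * ε := by
  have hf : ApproxSolvesFundamentalEq f ε := h
  refine ⟨f 0, f 1, f (1 / 4), stepFn (f 0) (f 1) (f (1 / 4)), stepFn_zero _ _ _,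
    fun x => stepFn_of_pos_of_lt_one _ _ _, stepFn_one _ _ _, fun x y => stepFn_add_div_eq _ _ _,
    fun x hx0 hx1 => ?_⟩
  rcases hx0.eq_or_lt with rfl | hx0
  · simpa using hf.nonneg
  rcases hx1.eq_or_lt with rfl | hx1
  · simpa using hf.nonneg
  rw [stepFn_of_pos_of_lt_one _ _ _ hx0 hx1]
  linarith [hf.nonneg, hf.abs_sub_quarter_le hx0 hx1]

theorem stmt15 (ε : ℝ) (hε : 0 ≤ ε) (f : ℝ → ℝ)
    (h : ∀ x y : ℝ, 0 ≤ x → x < 1 → 0 ≤ y → y < 1 → x + y ≤ 1 →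
      |f x + f (y / (1 - x)) - f y - f (x / (1 - y))| ≤ ε) :
    ∃ (a b c : ℝ) (h₂ : ℝ → ℝ),
      h₂ 0 = a ∧
      (∀ x : ℝ, 0 < x → x < 1 → h₂ x = c) ∧
      h₂ 1 = b ∧
      (∀ x y : ℝ, 0 ≤ x → x < 1 → 0 ≤ y → y < 1 → x + y ≤ 1 →
        h₂ x + h₂ (y / (1 - x)) = h₂ y + h₂ (x / (1 - y))) ∧
      ∀ x : ℝ, 0 ≤ x → x ≤ 1 → |f x - h₂ x| ≤ 63 * ε :=
  stmt15_general ε f h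
end
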